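/- Let G be a finite additive abelian group and Σ=(Γ=(V,E),σ) a signed graph. Then the number P_Σ(G) of proper G-colorings of Σ is given by P_Σ(G) = (−1)^{|V|−k(Σ)} · |G|^{k(Σ)} · T_Σ(1−|G|, 0, 1−1/|2G|). -/

import Mathlib

attribute [local instance] Classical.propDecidable

noncomputable section SignedGraphs

/-- A signed graph: a multigraph with ordered pairs of endpoints (the order is
an artefact of the encoding) together with a sign `±1` on each edge. -/
structure SGraph (V : Type*) (E : Type*) where
  ends : E → V × V
  sign : E → ℤˣ

namespace SGraph

variable {V E : Type*}

/-- Endpoint of `e` on side `b`; a loop has both endpoints equal, but its two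
half-edges are distinguished by the side `b`. -/
def endpt (Γ : SGraph V E) (e : E) (b : Bool) : V :=
  cond b (Γ.ends e).1 (Γ.ends e).2

/-- `e` is a loop of the underlying graph. -/
def IsLoop (Γ : SGraph V E) (e : E) : Prop := (Γ.ends e).1 = (Γ.ends e).2

/-- Walks in a signed multigraph: a step traverses an edge `e` in direction `d`
(from the side-`d` endpoint to the other endpoint). -/
inductive Walk (Γ : SGraph V E) : V → V → Type _
  | nil (v : V) : Walk Γ v v
  | cons (e : E) (d : Bool) {w : V} (p : Walk Γ (Γ.endpt e (!d)) w) : Walk Γ (Γ.endpt e d) w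

namespace Walk

variable {Γ : SGraph V E}

/-- The list of vertices visited by a walk (including the final one). -/
def verts : ∀ {u v : V}, Γ.Walk u v → List V
  | _, _, .nil x => [x]
  | _, _, .cons e d p => Γ.endpt e d :: p.verts

/-- The list of edges traversed by a walk. -/
def edges : ∀ {u v : V}, Γ.Walk u v → List E
  | _, _, .nil _ => []
  | _, _, .cons e _ p => e :: p.edges

/-- The list of (edge, direction) steps of a walk. -/
def steps : ∀ {u v : V}, Γ.Walk u v → List (E × Bool)
  | _, _, .nil _ => []
  | _, _, .cons e d p => (e, d) :: p.steps

/-- The sources of the steps of a walk, i.e. all visited vertices except the last. -/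
def srcs {u v : V} (W : Γ.Walk u v) : List V := W.verts.dropLast

/-- The sign of a walk: the product of the signs of its edges. -/
def sgn : ∀ {u v : V}, Γ.Walk u v → ℤˣ
  | _, _, .nil _ => 1
  | _, _, .cons e _ p => Γ.sign e * p.sgn

/-- Concatenation of walks. -/
def append : ∀ {u v w : V}, Γ.Walk u v → Γ.Walk v w → Γ.Walk u w
  | _, _, _, .nil _, q => q
  | _, _, _, .cons e d p, q => .cons e d (p.append q)

/-- The sum `Σᵢ f(eᵢ)` of the values of `f` on the edges of the walk,
with multiplicity. -/
def edgeSum {G : Type*} [AddCommGroup G] (f : E → G) {u v : V} (W : Γ.Walk u v) : G :=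
  (W.edges.map f).sum

/-- The sum `Σᵢ ω(vᵢ,eᵢ)·(Π_{j<i} σ(eⱼ))·f(eᵢ)` along a walk, where `ω(vᵢ,eᵢ)`
is the value of `ω` on the half-edge by which the walk leaves `vᵢ`. -/
def tensionSum {G : Type*} [AddCommGroup G] (ω : E → Bool → ℤˣ) (f : E → G) :
    ∀ {u v : V}, Γ.Walk u v → G
  | _, _, .nil _ => 0
  | _, _, .cons e d p => ((ω e d : ℤ) • f e) + ((Γ.sign e : ℤ) • tensionSum ω f p)

/-- `Q` is the reverse of the walk `P`. -/
def IsReverseOf {u v : V} (Q : Γ.Walk v u) (P : Γ.Walk u v) : Prop :=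
  Q.steps = P.steps.reverse.map fun s => (s.1, !s.2)

end Walk

/-- A closed walk is a cycle if it is nontrivial, visits no vertex twice and
uses no edge twice. -/
def IsCycle (Γ : SGraph V E) {v : V} (W : Γ.Walk v v) : Prop :=
  W.edges ≠ [] ∧ W.srcs.Nodup ∧ W.edges.Nodup

/-- A balanced (positive) cycle. -/
def IsBalancedCycle (Γ : SGraph V E) {v : V} (W : Γ.Walk v v) : Prop :=
  Γ.IsCycle W ∧ W.sgn = 1

/-- An unbalanced (negative) cycle. -/
def IsUnbalancedCycle (Γ : SGraph V E) {v : V} (W : Γ.Walk v v) : Prop :=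
  Γ.IsCycle W ∧ W.sgn = -1

/-- A nontrivial walk that is a simple path (all visited vertices distinct). -/
def IsPathWalk (Γ : SGraph V E) {u v : V} (P : Γ.Walk u v) : Prop :=
  P.edges ≠ [] ∧ P.verts.Nodup

/-- A tight handcuff at `v`: two edge-disjoint unbalanced cycles sharing exactly
the vertex `v`. -/
def IsTightHandcuff (Γ : SGraph V E) {v : V} (C₁ C₂ : Γ.Walk v v) : Prop :=
  Γ.IsUnbalancedCycle C₁ ∧ Γ.IsUnbalancedCycle C₂ ∧
    (∀ x ∈ C₁.srcs, x ∈ C₂.srcs → x = v) ∧ ∀ e ∈ C₁.edges, e ∉ C₂.edges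

/-- A loose handcuff: two vertex-disjoint unbalanced cycles `C₁` (at `u`) and
`C₂` (at `w`) joined by a simple path `P` from `u` to `w` meeting the cycles
exactly in its endpoints. -/
def IsLooseHandcuff (Γ : SGraph V E) {u w : V} (C₁ : Γ.Walk u u) (P : Γ.Walk u w)
    (C₂ : Γ.Walk w w) : Prop :=
  Γ.IsUnbalancedCycle C₁ ∧ Γ.IsUnbalancedCycle C₂ ∧ Γ.IsPathWalk P ∧
    (∀ x ∈ C₁.srcs, x ∉ C₂.srcs) ∧
    (∀ x ∈ P.verts, x ∈ C₁.srcs → x = u) ∧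
    (∀ x ∈ P.verts, x ∈ C₂.srcs → x = w) ∧
    ∀ e ∈ P.edges, e ∉ C₁.edges ∧ e ∉ C₂.edges

/-- The canonical closed walks traversing a circuit of the signed graph:
a balanced cycle, a tight handcuff `C₁ * C₂`, or a loose handcuff
`C₁ * P * C₂ * P⁻¹` (the circuit path edges being used twice). -/
def IsBasicCircuitWalk (Γ : SGraph V E) {v : V} (W : Γ.Walk v v) : Prop :=
  Γ.IsBalancedCycle W ∨
    (∃ C₁ C₂ : Γ.Walk v v, Γ.IsTightHandcuff C₁ C₂ ∧ W = C₁.append C₂) ∨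
    ∃ (w : V) (C₁ : Γ.Walk v v) (P : Γ.Walk v w) (C₂ : Γ.Walk w w) (Q : Γ.Walk w v),
      Γ.IsLooseHandcuff C₁ P C₂ ∧ Q.IsReverseOf P ∧
        W = C₁.append (P.append (C₂.append Q))

/-- A circuit walk: a rotation of a basic circuit walk. -/
def IsCircuitWalk (Γ : SGraph V E) {v : V} (W : Γ.Walk v v) : Prop :=
  ∃ (u : V) (A : Γ.Walk u v) (B : Γ.Walk v u),
    W = B.append A ∧ Γ.IsBasicCircuitWalk (A.append B)

/-- `e` is a circuit path edge: it lies on the connecting path of an unbalanced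
loose handcuff. -/
def IsCircuitPathEdge (Γ : SGraph V E) (e : E) : Prop :=
  ∃ (u w : V) (C₁ : Γ.Walk u u) (P : Γ.Walk u w) (C₂ : Γ.Walk w w),
    Γ.IsLooseHandcuff C₁ P C₂ ∧ e ∈ P.edges

/-- Adjacency via an edge. -/
def Adj (Γ : SGraph V E) (a b : V) : Prop := ∃ e, Γ.ends e = (a, b) ∨ Γ.ends e = (b, a)

/-- The set of connected components. -/
def Components (Γ : SGraph V E) : Type _ := Quot Γ.Adj

/-- The connected component of a vertex. -/
def comp (Γ : SGraph V E) (v : V) : Γ.Components := Quot.mk _ v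

/-- The number `k(Γ)` of connected components. -/
def kAll (Γ : SGraph V E) : ℕ := Nat.card Γ.Components

/-- A connected component is balanced if every cycle it contains is balanced. -/
def IsBalancedComponent (Γ : SGraph V E) (c : Γ.Components) : Prop :=
  ∀ v : V, Γ.comp v = c → ∀ W : Γ.Walk v v, Γ.IsCycle W → W.sgn = 1

/-- The number `k_b(Σ)` of balanced connected components. -/
def kb (Γ : SGraph V E) : ℕ := Nat.card {c : Γ.Components // Γ.IsBalancedComponent c}

/-- The number `k_u(Σ)` of unbalanced connected components. -/
def ku (Γ : SGraph V E) : ℕ := Nat.card {c : Γ.Components // ¬ Γ.IsBalancedComponent c}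

/-- A signed graph is balanced if all its cycles are balanced. -/
def Balanced (Γ : SGraph V E) : Prop :=
  ∀ (v : V) (W : Γ.Walk v v), Γ.IsCycle W → W.sgn = 1

/-- A signed graph is connected if it has exactly one connected component. -/
def Connected (Γ : SGraph V E) : Prop := Γ.kAll = 1

/-- The spanning subgraph `Σ \ Aᶜ` with edge set `A`. -/
def restrict (Γ : SGraph V E) (A : Set E) : SGraph V A :=
  { ends := fun e => Γ.ends e, sign := fun e => Γ.sign e }

/-- The signed Tutte polynomial (as a function of `x`, `y`, `z`):
`T_Σ(X,Y,Z) = Σ_{A⊆E} (X−1)^{k(Σ\Aᶜ)−k(Σ)} (Y−1)^{|A|−|V|+k_b(Σ\Aᶜ)} (Z−1)^{k_u(Σ\Aᶜ)}`. -/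
def signedTutte {K : Type*} [CommRing K] (Γ : SGraph V E) (x y z : K) : K :=
  ∑ᶠ A : Finset E,
    (x - 1) ^ ((Γ.restrict (A : Set E)).kAll - Γ.kAll) *
      (y - 1) ^ ((A.card + (Γ.restrict (A : Set E)).kb) - Nat.card V) *
        (z - 1) ^ (Γ.restrict (A : Set E)).ku

/-- Deletion of an edge. -/
def deleteEdge (Γ : SGraph V E) (e : E) : SGraph V {e' : E // e' ≠ e} :=
  { ends := fun e' => Γ.ends e'.1, sign := fun e' => Γ.sign e'.1 }

/-- The relation identifying the two endpoints of `e`. -/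
def contractRel (Γ : SGraph V E) (e : E) (a b : V) : Prop := (a, b) = Γ.ends e

/-- Contraction of an edge: the two endpoints are identified and the edge is
deleted.  (For a loop this is just deletion, as the identification is trivial.) -/
def contract (Γ : SGraph V E) (e : E) : SGraph (Quot (Γ.contractRel e)) {e' : E // e' ≠ e} :=
  { ends := fun e' => (Quot.mk _ (Γ.ends e'.1).1, Quot.mk _ (Γ.ends e'.1).2),
    sign := fun e' => Γ.sign e'.1 }

/-- `e` is a bridge: its deletion increases the number of connected components. -/
def IsBridge (Γ : SGraph V E) (e : E) : Prop := Γ.kAll < (Γ.deleteEdge e).kAll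

/-- An orientation of the half-edges, compatible with the signature. -/
def IsCompatible (Γ : SGraph V E) (ω : E → Bool → ℤˣ) : Prop :=
  ∀ e, Γ.sign e = -(ω e true * ω e false)

/-- A `G`-flow: Kirchhoff's law holds at every vertex. -/
def IsFlow (Γ : SGraph V E) (ω : E → Bool → ℤˣ) {G : Type*} [AddCommGroup G]
    (f : E → G) : Prop :=
  ∀ v : V,
    (∑ᶠ e : E, ((if Γ.endpt e true = v then (ω e true : ℤ) • f e else 0) +
      (if Γ.endpt e false = v then (ω e false : ℤ) • f e else 0))) = 0

/-- A `G`-tension: the alternating sum along every circuit walk vanishes. -/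
def IsTension (Γ : SGraph V E) (ω : E → Bool → ℤˣ) {G : Type*} [AddCommGroup G]
    (f : E → G) : Prop :=
  ∀ (v : V) (W : Γ.Walk v v), Γ.IsCircuitWalk W → W.tensionSum ω f = 0

end SGraph

/-- The doubling homomorphism `x ↦ x + x = 2x` of an abelian group. -/
def doubleHom (G : Type*) [AddCommGroup G] : G →+ G :=
  AddMonoidHom.mk' (fun x => x + x) (fun a b => add_add_add_comm a b a b)

/-- The subgroup `2G = {2x : x ∈ G}`. -/
def twoG (G : Type*) [AddCommGroup G] : AddSubgroup G := (doubleHom G).range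

/-- The `2`-torsion subgroup `G₂ = {x ∈ G : 2x = 0}`. -/
def torsion2 (G : Type*) [AddCommGroup G] : AddSubgroup G := (doubleHom G).ker

namespace SGraph

variable {V E : Type*}

/-- A `G`-potential difference: a `G`-tension whose sum around every unbalanced
cycle lies in `2G`. -/
def IsPotentialDifference (Γ : SGraph V E) (ω : E → Bool → ℤˣ) {G : Type*} [AddCommGroup G]
    (f : E → G) : Prop :=
  Γ.IsTension ω f ∧
    ∀ (v : V) (W : Γ.Walk v v), Γ.IsUnbalancedCycle W → W.edgeSum f ∈ twoG G

end SGraph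

namespace SGraph

variable {V E : Type*}

/-- Proper coloring by elements of a set `X` with involution `ι`: adjacent
endpoints of a positive edge get different colors, and for a negative edge the
`ι`-image of one endpoint's color differs from the other endpoint's color. -/
def IsProperInvColoring (Γ : SGraph V E) {X : Type*} (ι : X → X) (f : V → X) : Prop :=
  ∀ e : E, (Γ.sign e = 1 → f ((Γ.ends e).1) ≠ f ((Γ.ends e).2)) ∧
    (Γ.sign e = -1 → ι (f ((Γ.ends e).1)) ≠ f ((Γ.ends e).2))

/-- A proper `G`-coloring: for every edge `e = uv`, `f(u) ≠ f(v)` if `e` is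
positive and `-f(u) ≠ f(v)` if `e` is negative, i.e. `σ(e)•f(u) ≠ f(v)`. -/
def IsProperColoring (Γ : SGraph V E) {G : Type*} [AddCommGroup G] (f : V → G) : Prop :=
  ∀ e : E, ((Γ.sign e : ℤ) • f ((Γ.ends e).1)) ≠ f ((Γ.ends e).2)

/-- Zaslavsky's proper `n`-coloring: colors in `{0, ±1, …, ±n}` with
`f(u) ≠ σ(e)·f(v)` for every edge `e = uv`. -/
def IsProperNColoring (Γ : SGraph V E) (n : ℕ) (f : V → ℤ) : Prop :=
  (∀ v, |f v| ≤ (n : ℤ)) ∧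
    ∀ e : E, f ((Γ.ends e).1) ≠ (Γ.sign e : ℤ) * f ((Γ.ends e).2)

/-- `T ⊆ E` is a spanning tree: the spanning subgraph `(V,T)` is connected and
contains no cycle. -/
def IsSpanningTree (Γ : SGraph V E) (T : Set E) : Prop :=
  (Γ.restrict T).Connected ∧
    ∀ (v : V) (W : (Γ.restrict T).Walk v v), ¬ (Γ.restrict T).IsCycle W

/-- A connected basis of a connected signed graph: a spanning tree if `Σ` is
balanced; otherwise a spanning tree plus one extra edge closing an unbalanced
cycle. -/
def IsConnectedBasis (Γ : SGraph V E) (B : Set E) : Prop :=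
  (Γ.Balanced ∧ Γ.IsSpanningTree B) ∨
    (¬ Γ.Balanced ∧ ∃ (T : Set E) (e : E), Γ.IsSpanningTree T ∧ e ∉ T ∧ B = insert e T ∧
      ∀ (v : V) (W : (Γ.restrict B).Walk v v), (Γ.restrict B).IsCycle W → W.sgn = -1)

/-- Switching at a vertex `v`: the sign of every non-loop edge incident with `v`
is negated; loops keep their sign. -/
def switchAt (Γ : SGraph V E) (v : V) : SGraph V E :=
  { ends := Γ.ends,
    sign := fun e => if ((Γ.ends e).1 = v ↔ (Γ.ends e).2 = v) then Γ.sign e else -Γ.sign e }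

/-- Switching at a set `S` of vertices (the composite of the switchings at the
vertices of `S`): the sign of an edge is negated iff exactly one of its
endpoints lies in `S`. -/
def switchSet (Γ : SGraph V E) (S : Set V) : SGraph V E :=
  { ends := Γ.ends,
    sign := fun e => if ((Γ.ends e).1 ∈ S ↔ (Γ.ends e).2 ∈ S) then Γ.sign e else -Γ.sign e }

/-- Isomorphism of signed graphs (as undirected signed multigraphs). -/
def Iso {V₁ E₁ V₂ E₂ : Type*} (Γ₁ : SGraph V₁ E₁) (Γ₂ : SGraph V₂ E₂) : Prop :=
  ∃ (φ : V₁ ≃ V₂) (ψ : E₁ ≃ E₂), ∀ e : E₁,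
    (Γ₂.ends (ψ e) = (φ (Γ₁.ends e).1, φ (Γ₁.ends e).2) ∨
      Γ₂.ends (ψ e) = (φ (Γ₁.ends e).2, φ (Γ₁.ends e).1)) ∧
    Γ₂.sign (ψ e) = Γ₁.sign e

/-- Switching equivalence: isomorphism after switching at a set of vertices. -/
def SwitchEquiv {V₁ E₁ V₂ E₂ : Type*} (Γ₁ : SGraph V₁ E₁) (Γ₂ : SGraph V₂ E₂) : Prop :=
  ∃ S : Set V₁, Iso (Γ₁.switchSet S) Γ₂

/-- Disjoint union of signed graphs. -/
def disjUnion {V₁ E₁ V₂ E₂ : Type*} (Γ₁ : SGraph V₁ E₁) (Γ₂ : SGraph V₂ E₂) :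
    SGraph (V₁ ⊕ V₂) (E₁ ⊕ E₂) where
  ends := fun e => match e with
    | .inl e => (Sum.inl (Γ₁.ends e).1, Sum.inl (Γ₁.ends e).2)
    | .inr e => (Sum.inr (Γ₂.ends e).1, Sum.inr (Γ₂.ends e).2)
  sign := fun e => match e with
    | .inl e => Γ₁.sign e
    | .inr e => Γ₂.sign e

/-- The difference operator `δ : G^V → G^E`,
`(δg)(e) = ω(v,e)·g(v) + ω(u,e)·g(u)` for `e = uv`. -/
def deltaHom (Γ : SGraph V E) (ω : E → Bool → ℤˣ) (G : Type*) [AddCommGroup G] :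
    (V → G) →+ (E → G) :=
  AddMonoidHom.mk'
    (fun g e => (ω e true : ℤ) • g ((Γ.ends e).1) + (ω e false : ℤ) • g ((Γ.ends e).2))
    (by
      intro a b
      funext e
      simp only [Pi.add_apply, smul_add]
      abel)

end SGraph

end SignedGraphs

/-!
By inclusion–exclusion over the set `A` of edges on which a coloring is improper,
`P_Σ(G) = Σ_A (-1)^|A| N(A)`, where `N(A)` counts the colorings with `σ(e) f(u) = f(v)` on
every edge `e = uv` of `A`. Such a coloring is determined on each component of `(V, A)` by its
value at one vertex, propagated along walks with their signs. On a balanced component every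
closed walk is positive, so this value is arbitrary; on an unbalanced one, a negative cycle
forces it to be `2`-torsion. Hence `N(A) = |G|^{k_b(A)} |G₂|^{k_u(A)}`, and `|G| = |2G| |G₂|`
turns this into the `A`-term of the Tutte expansion, provided the truncated exponents are
genuine: `k ≤ |V|`, `k ≤ k(A)` and `|V| ≤ |A| + k_b(A)`.
-/

lemma mem_torsion2_iff {G : Type*} [AddCommGroup G] {x : G} : x ∈ torsion2 G ↔ x + x = 0 :=
  Iff.rfl

lemma units_int_smul_of_mem_torsion2 {G : Type*} [AddCommGroup G] {x : G}
    (hx : x ∈ torsion2 G) (u : ℤˣ) : (u : ℤ) • x = x := by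
  rcases Int.units_eq_one_or u with rfl | rfl
  · simp
  · simpa using neg_eq_of_add_eq_zero_left (mem_torsion2_iff.mp hx)

lemma card_twoG_mul_card_torsion2 (G : Type*) [AddCommGroup G] :
    Nat.card (twoG G) * Nat.card (torsion2 G) = Nat.card G := by
  rw [twoG, torsion2, ← AddSubgroup.index_ker, mul_comm, AddSubgroup.card_mul_index]

lemma card_torsion2_zmod_three : Nat.card (torsion2 (ZMod 3)) = 1 := by
  rw [AddSubgroup.card_eq_one, AddSubgroup.eq_bot_iff_forall]
  intro x hx
  fin_cases x
  · rfl
  · exact absurd (mem_torsion2_iff.mp hx) (by decide)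
  · exact absurd (mem_torsion2_iff.mp hx) (by decide)

lemma Nat.card_subtype_pi_mem_of_not {ι G : Type*} [AddGroup G] (p : ι → Prop)
    (H : AddSubgroup G) :
    Nat.card {g : ι → G // ∀ i, ¬ p i → g i ∈ H} =
      Nat.card ({i // p i} → G) * Nat.card ({i // ¬ p i} → H) := by
  rw [← Nat.card_prod]
  exact Nat.card_congr <|
    (Equiv.subtypePiEquivPi (β := fun _ => G) (p := fun i x => ¬ p i → x ∈ H)).trans <|
      (Equiv.piEquivPiSubtypeProd p _).trans <|
        Equiv.prodCongr
          (Equiv.piCongrRight fun i => Equiv.subtypeUnivEquiv fun _ h => absurd i.2 h)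
          (Equiv.piCongrRight fun i => Equiv.subtypeEquivRight fun _ => imp_iff_right i.2)

namespace SGraph

variable {V E : Type*} {Γ : SGraph V E}

namespace Walk

@[simp] lemma verts_cons (e : E) (d : Bool) {w : V} (p : Γ.Walk (Γ.endpt e (!d)) w) :
    (cons e d p).verts = Γ.endpt e d :: p.verts := rfl

@[simp] lemma edges_nil (x : V) : (nil (Γ := Γ) x).edges = [] := rfl

@[simp] lemma edges_cons (e : E) (d : Bool) {w : V} (p : Γ.Walk (Γ.endpt e (!d)) w) :
    (cons e d p).edges = e :: p.edges := rfl

@[simp] lemma sgn_nil (x : V) : (nil (Γ := Γ) x).sgn = 1 := rfl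

@[simp] lemma sgn_cons (e : E) (d : Bool) {w : V} (p : Γ.Walk (Γ.endpt e (!d)) w) :
    (cons e d p).sgn = Γ.sign e * p.sgn := rfl

@[simp] lemma nil_append {v w : V} (q : Γ.Walk v w) : (nil v).append q = q := rfl

@[simp] lemma cons_append (e : E) (d : Bool) {v w : V} (p : Γ.Walk (Γ.endpt e (!d)) v)
    (q : Γ.Walk v w) : (cons e d p).append q = cons e d (p.append q) := rfl

lemma verts_ne_nil {u v : V} (W : Γ.Walk u v) : W.verts ≠ [] := by
  cases W <;> simp [verts]

@[simp] lemma srcs_nil (x : V) : (nil (Γ := Γ) x).srcs = [] := rfl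

@[simp] lemma srcs_cons (e : E) (d : Bool) {w : V} (p : Γ.Walk (Γ.endpt e (!d)) w) :
    (cons e d p).srcs = Γ.endpt e d :: p.srcs := by
  rw [srcs, verts_cons, List.dropLast_cons_of_ne_nil (verts_ne_nil p)]
  rfl

lemma srcs_append {u v w : V} (P : Γ.Walk u v) (Q : Γ.Walk v w) :
    (P.append Q).srcs = P.srcs ++ Q.srcs := by
  induction P with
  | nil => rfl
  | cons e d p ih => simp [ih]

lemma edges_append {u v w : V} (P : Γ.Walk u v) (Q : Γ.Walk v w) :
    (P.append Q).edges = P.edges ++ Q.edges := by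
  induction P with
  | nil => rfl
  | cons e d p ih => simp [ih]

lemma sgn_append {u v w : V} (P : Γ.Walk u v) (Q : Γ.Walk v w) :
    (P.append Q).sgn = P.sgn * Q.sgn := by
  induction P with
  | nil => simp
  | cons e d p ih => simp [ih, mul_assoc]

lemma sgn_eq_one_of_edges_eq_nil {u v : V} (W : Γ.Walk u v) (h : W.edges = []) :
    W.sgn = 1 := by
  cases W with
  | nil => rfl
  | cons e d p => simp at h

lemma start_mem_srcs {u v : V} (W : Γ.Walk u v) (h : W.edges ≠ []) : u ∈ W.srcs := by
  cases W with
  | nil => simp at h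
  | cons e d p => simp

def single (e : E) (d : Bool) : Γ.Walk (Γ.endpt e d) (Γ.endpt e (!d)) := cons e d (nil _)

@[simp] lemma sgn_single (e : E) (d : Bool) : (single (Γ := Γ) e d).sgn = Γ.sign e := by
  simp [single]

def singleRev (e : E) : ∀ d : Bool, Γ.Walk (Γ.endpt e (!d)) (Γ.endpt e d)
  | true => single e false
  | false => single e true

@[simp] lemma sgn_singleRev (e : E) (d : Bool) : (singleRev (Γ := Γ) e d).sgn = Γ.sign e := by
  cases d <;> simp [singleRev]

def reverse : ∀ {u v : V}, Γ.Walk u v → Γ.Walk v u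
  | _, _, .nil x => .nil x
  | _, _, .cons e d p => p.reverse.append (singleRev e d)

@[simp] lemma sgn_reverse {u v : V} (W : Γ.Walk u v) : W.reverse.sgn = W.sgn := by
  induction W with
  | nil => rfl
  | cons e d p ih => rw [reverse, sgn_append, ih, sgn_singleRev, sgn_cons, mul_comm]

end Walk

open Walk

lemma adj_endpt (e : E) (d : Bool) : Γ.Adj (Γ.endpt e d) (Γ.endpt e (!d)) := by
  cases d
  · exact ⟨e, Or.inr rfl⟩
  · exact ⟨e, Or.inl rfl⟩

lemma nonempty_walk_of_adj {a b : V} (h : Γ.Adj a b) : Nonempty (Γ.Walk a b) := by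
  obtain ⟨e, h | h⟩ := h
  · have ha : Γ.endpt e true = a := by simp [endpt, h]
    have hb : Γ.endpt e false = b := by simp [endpt, h]
    exact ha ▸ hb ▸ ⟨single e true⟩
  · have ha : Γ.endpt e false = a := by simp [endpt, h]
    have hb : Γ.endpt e true = b := by simp [endpt, h]
    exact ha ▸ hb ▸ ⟨single e false⟩

lemma comp_eq_iff_nonempty_walk {a b : V} : Γ.comp a = Γ.comp b ↔ Nonempty (Γ.Walk a b) := by
  constructor
  · intro h
    replace h := Quot.eqvGen_exact h
    induction h with
    | rel a b hab => exact nonempty_walk_of_adj hab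
    | refl a => exact ⟨nil a⟩
    | symm a b _ ih => exact ⟨ih.some.reverse⟩
    | trans a b c _ _ ih ih' => exact ⟨ih.some.append ih'.some⟩
  · rintro ⟨W⟩
    induction W with
    | nil => rfl
    | cons e d p ih => exact (Quot.sound (adj_endpt e d)).trans ih

lemma exists_eq_append_of_mem_srcs {u v x : V} (W : Γ.Walk u v) (hx : x ∈ W.srcs) :
    ∃ (P : Γ.Walk u x) (Q : Γ.Walk x v), W = P.append Q ∧ x ∉ P.srcs ∧ Q.edges ≠ [] := by
  induction W with
  | nil => simp at hx
  | cons e d p ih =>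
    by_cases hxu : x = Γ.endpt e d
    · subst hxu
      exact ⟨nil _, cons e d p, rfl, by simp, by simp⟩
    · obtain ⟨P, Q, rfl, hxP, hQ⟩ := ih (by simpa [hxu] using hx)
      exact ⟨cons e d P, Q, rfl, by simp [hxu, hxP], hQ⟩

lemma exists_eq_append_cons_of_mem_edges {u v : V} (W : Γ.Walk u v) {e : E}
    (he : e ∈ W.edges) :
    ∃ (d : Bool) (P : Γ.Walk u (Γ.endpt e d)) (Q : Γ.Walk (Γ.endpt e (!d)) v),
      W = P.append (cons e d Q) := by
  induction W with
  | nil => simp at he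
  | cons e' d' p ih =>
    by_cases hee : e = e'
    · subst hee
      exact ⟨d', nil _, p, rfl⟩
    · obtain ⟨d, P, Q, rfl⟩ := ih (by simpa [hee] using he)
      exact ⟨d, cons e' d' P, Q, rfl⟩

/-- In a walk without repeated sources, a repeated edge is traversed back and forth
in two consecutive steps; cutting out this detour keeps the sign. -/
lemma exists_shorter_of_not_nodup_edges {u v : V} (W : Γ.Walk u v) (hs : W.srcs.Nodup)
    (he : ¬ W.edges.Nodup) :
    ∃ W' : Γ.Walk u v, W'.sgn = W.sgn ∧ W'.edges.length + 2 = W.edges.length := by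
  induction W with
  | nil => simp at he
  | cons e d p ih =>
    rw [srcs_cons, List.nodup_cons] at hs
    by_cases hep : e ∈ p.edges
    · obtain ⟨d', S, T, hp⟩ := exists_eq_append_cons_of_mem_edges p hep
      subst hp
      rw [srcs_append, srcs_cons] at hs
      obtain rfl : d' = !d := by
        cases d <;> cases d' <;> first | rfl | exact absurd (by simp) hs.1
      have hS : S.edges = [] := by
        by_contra hS
        have := hs.2
        simp only [List.nodup_append] at this
        exact this.2.2 _ (start_mem_srcs S hS) _ List.mem_cons_self rfl
      have hsgn : (cons e d (S.append (cons e (!d) T))).sgn = T.sgn := by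
        simp [sgn_append, sgn_eq_one_of_edges_eq_nil S hS, ← mul_assoc, Int.units_mul_self]
      have hlen : (cons e d (S.append (cons e (!d) T))).edges.length = T.edges.length + 2 := by
        simp [edges_append, hS]
      cases d
      · exact ⟨T, hsgn.symm, hlen.symm⟩
      · exact ⟨T, hsgn.symm, hlen.symm⟩
    · obtain ⟨p', hsgn, hlen⟩ := ih hs.2 (fun h => he (List.nodup_cons.mpr ⟨hep, h⟩))
      exact ⟨cons e d p', by simp [hsgn], by simp [hlen]⟩

/-- A negative closed walk splits at a repeated vertex into two shorter closed walks,
one of which is negative, and sheds back-and-forth detours; it ends up at a negative cycle. -/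
lemma exists_isUnbalancedCycle_of_sgn_eq_neg_one {u : V} (W : Γ.Walk u u) (hW : W.sgn = -1) :
    ∃ (x : V) (C : Γ.Walk x x), Γ.IsUnbalancedCycle C ∧ Nonempty (Γ.Walk u x) := by
  induction hn : W.edges.length using Nat.strong_induction_on generalizing u with
  | _ n ih =>
  have hne : W.edges ≠ [] := fun h => by
    rw [sgn_eq_one_of_edges_eq_nil W h] at hW
    exact absurd hW (by decide)
  by_cases hs : W.srcs.Nodup
  · by_cases he : W.edges.Nodup
    · exact ⟨u, W, ⟨⟨hne, hs, he⟩, hW⟩, ⟨nil u⟩⟩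
    · obtain ⟨W', hsgn, hlen⟩ := exists_shorter_of_not_nodup_edges W hs he
      exact ih _ (by omega) W' (hsgn.trans hW) rfl
  · obtain ⟨x, hdup⟩ := List.exists_duplicate_iff_not_nodup.mpr hs
    obtain ⟨P, Q, rfl, hxP, -⟩ := exists_eq_append_of_mem_srcs W hdup.mem
    have hxQ : 2 ≤ Q.srcs.count x := by
      have := List.duplicate_iff_two_le_count.mp hdup
      rwa [srcs_append, List.count_append, List.count_eq_zero.mpr hxP, zero_add] at this
    cases Q with
    | nil => simp at hxQ
    | cons e d q =>
      rw [srcs_cons, List.count_cons_self] at hxQ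
      have hxq : Γ.endpt e d ∈ q.srcs := List.count_pos_iff.mp (by omega)
      obtain ⟨S, T, rfl, -, hT⟩ := exists_eq_append_of_mem_srcs q hxq
      have hT : 0 < T.edges.length := List.length_pos_iff.mpr hT
      simp only [edges_append, edges_cons, List.length_append, List.length_cons] at hn
      have hsgn : (cons e d S).sgn * (P.append T).sgn = -1 := by
        rw [← hW]
        simp only [sgn_append, sgn_cons]
        ac_rfl
      rcases Int.units_eq_one_or (cons e d S).sgn with h | h
      · rw [h, one_mul] at hsgn
        exact ih _ (by simp [edges_append]; omega) (P.append T) hsgn rfl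
      · obtain ⟨y, C, hC, ⟨R⟩⟩ := ih _ (by simp; omega) (cons e d S) h rfl
        exact ⟨y, C, hC, ⟨P.append R⟩⟩

lemma IsBalancedComponent.sgn_eq_one {u : V} (hc : Γ.IsBalancedComponent (Γ.comp u))
    (W : Γ.Walk u u) : W.sgn = 1 := by
  rcases Int.units_eq_one_or W.sgn with h | h
  · exact h
  · obtain ⟨x, C, hC, hux⟩ := exists_isUnbalancedCycle_of_sgn_eq_neg_one W h
    have := hc x (comp_eq_iff_nonempty_walk.mpr hux).symm C hC.1
    exact absurd (hC.2.symm.trans this) (by decide)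

lemma IsBalancedComponent.sgn_eq_sgn {x x' y : V} (hc : Γ.IsBalancedComponent (Γ.comp y))
    (P : Γ.Walk x y) (Q : Γ.Walk x' y) (hx : x = x') : P.sgn = Q.sgn := by
  subst hx
  have hc' : Γ.IsBalancedComponent (Γ.comp x) := by
    rwa [comp_eq_iff_nonempty_walk.mpr ⟨P⟩]
  have := hc'.sgn_eq_one (P.append Q.reverse)
  rw [sgn_append, sgn_reverse] at this
  rcases Int.units_eq_one_or P.sgn with h | h <;>
    rcases Int.units_eq_one_or Q.sgn with h' | h' <;> simp_all

variable {G : Type*} [AddCommGroup G]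

def IsSignConstant (Γ : SGraph V E) (f : V → G) : Prop :=
  ∀ e : E, (Γ.sign e : ℤ) • f (Γ.ends e).1 = f (Γ.ends e).2

namespace IsSignConstant

variable {f : V → G}

lemma apply_endpt_not (hf : Γ.IsSignConstant f) (e : E) (d : Bool) :
    f (Γ.endpt e (!d)) = (Γ.sign e : ℤ) • f (Γ.endpt e d) := by
  cases d
  · show f (Γ.ends e).1 = _ • f (Γ.ends e).2
    rw [← hf e, smul_smul, Int.units_coe_mul_self, one_smul]
  · exact (hf e).symm

lemma apply_eq_sgn_smul (hf : Γ.IsSignConstant f) {x y : V} (P : Γ.Walk x y) :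
    f y = (P.sgn : ℤ) • f x := by
  induction P with
  | nil => simp
  | cons e d p ih => rw [ih, hf.apply_endpt_not, smul_smul, sgn_cons, Units.val_mul, mul_comm]

lemma mem_torsion2 (hf : Γ.IsSignConstant f) {v : V}
    (hv : ¬ Γ.IsBalancedComponent (Γ.comp v)) : f v ∈ torsion2 G := by
  simp only [IsBalancedComponent, not_forall] at hv
  obtain ⟨w, hw, W, -, hW⟩ := hv
  obtain ⟨P⟩ := comp_eq_iff_nonempty_walk.mp hw
  have hfw : f w + f w = 0 := by
    have := hf.apply_eq_sgn_smul W
    rw [(Int.units_eq_one_or W.sgn).resolve_left hW] at this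
    simpa [eq_neg_iff_add_eq_zero] using this
  rw [mem_torsion2_iff, hf.apply_eq_sgn_smul P, ← smul_add, hfw, smul_zero]

end IsSignConstant

instance [Finite V] : Finite Γ.Components := Quot.finite _

lemma comp_out (c : Γ.Components) : Γ.comp (Quot.out c) = c := Quot.out_eq c

noncomputable def walkFromOut (Γ : SGraph V E) (v : V) : Γ.Walk (Quot.out (Γ.comp v)) v :=
  (comp_eq_iff_nonempty_walk.mp (Quot.out_eq (Γ.comp v))).some

noncomputable def ofComponents (Γ : SGraph V E) (g : Γ.Components → G) (v : V) : G :=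
  ((Γ.walkFromOut v).sgn : ℤ) • g (Γ.comp v)

lemma isSignConstant_ofComponents {g : Γ.Components → G}
    (hg : ∀ c, ¬ Γ.IsBalancedComponent c → g c ∈ torsion2 G) :
    Γ.IsSignConstant (Γ.ofComponents g) := by
  intro e
  have hab : Γ.comp (Γ.ends e).1 = Γ.comp (Γ.ends e).2 :=
    comp_eq_iff_nonempty_walk.mpr ⟨single e true⟩
  have hg' : g (Γ.comp (Γ.ends e).2) = g (Γ.comp (Γ.ends e).1) := by rw [hab]
  simp only [ofComponents, hg']
  by_cases hc : Γ.IsBalancedComponent (Γ.comp (Γ.ends e).2)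
  · have hsgn : (Γ.walkFromOut (Γ.ends e).2).sgn =
        (Γ.walkFromOut (Γ.ends e).1).sgn * Γ.sign e :=
      (hc.sgn_eq_sgn _ ((Γ.walkFromOut (Γ.ends e).1).append (single e true)) (by rw [hab])).trans
        ((sgn_append _ _).trans (congrArg _ (sgn_single e true)))
    rw [smul_smul, hsgn, Units.val_mul, mul_comm]
  · simp only [units_int_smul_of_mem_torsion2 (hg _ (hab ▸ hc))]

lemma ofComponents_out {g : Γ.Components → G}
    (hg : ∀ c, ¬ Γ.IsBalancedComponent c → g c ∈ torsion2 G) (c : Γ.Components) :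
    Γ.ofComponents g (Quot.out c) = g c := by
  rw [ofComponents, congrArg g (comp_out c)]
  by_cases hb : Γ.IsBalancedComponent c
  · rw [IsBalancedComponent.sgn_eq_sgn (by rwa [comp_out]) _ (nil _) (by rw [comp_out]),
      sgn_nil, Units.val_one, one_smul]
  · exact units_int_smul_of_mem_torsion2 (hg c hb) _

noncomputable def signConstantEquiv (Γ : SGraph V E) (G : Type*) [AddCommGroup G] :
    {f : V → G // Γ.IsSignConstant f} ≃
      {g : Γ.Components → G // ∀ c, ¬ Γ.IsBalancedComponent c → g c ∈ torsion2 G} where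
  toFun f := ⟨fun c => f.1 (Quot.out c), fun c hc => f.2.mem_torsion2 (by rwa [comp_out])⟩
  invFun g := ⟨Γ.ofComponents g.1, isSignConstant_ofComponents g.2⟩
  left_inv f := Subtype.ext <| funext fun v => (f.2.apply_eq_sgn_smul (Γ.walkFromOut v)).symm
  right_inv g := Subtype.ext <| funext <| ofComponents_out g.2

theorem card_isSignConstant [Finite V] (Γ : SGraph V E) (G : Type*) [AddCommGroup G] :
    Nat.card {f : V → G // Γ.IsSignConstant f} =
      Nat.card G ^ Γ.kb * Nat.card (torsion2 G) ^ Γ.ku := by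
  rw [Nat.card_congr (Γ.signConstantEquiv G), Nat.card_subtype_pi_mem_of_not, Nat.card_fun,
    Nat.card_fun, kb, ku]

lemma kAll_le_card [Finite V] (Γ : SGraph V E) : Γ.kAll ≤ Nat.card V :=
  Nat.card_le_card_of_surjective Γ.comp Quot.mk_surjective

lemma kAll_le_kAll_restrict [Finite V] (Γ : SGraph V E) (A : Set E) :
    Γ.kAll ≤ (Γ.restrict A).kAll :=
  Nat.card_le_card_of_surjective (Quot.map id fun _ _ ⟨e, h⟩ => ⟨e.1, h⟩)
    (Quot.ind fun v => ⟨(Γ.restrict A).comp v, rfl⟩)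

lemma kb_add_ku [Finite V] (Γ : SGraph V E) : Γ.kb + Γ.ku = Γ.kAll := by
  rw [kb, ku, kAll, ← Nat.card_sum, Nat.card_congr (Equiv.sumCompl _)]

/-- Over `ZMod 3`, where `torsion2` is trivial, the `3 ^ k_b` sign-constant colorings form the
kernel of a homomorphism `(V → ZMod 3) →+ (E → ZMod 3)`, so `3 ^ |V| ≤ 3 ^ k_b * 3 ^ |E|`. -/
lemma card_le_card_add_kb [Finite V] [Finite E] (Γ : SGraph V E) :
    Nat.card V ≤ Nat.card E + Γ.kb := by
  let δ := Γ.deltaHom (fun e b => cond b (Γ.sign e) (-1)) (ZMod 3)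
  have hker : Nat.card δ.ker = 3 ^ Γ.kb := by
    have := Γ.card_isSignConstant (ZMod 3)
    rw [card_torsion2_zmod_three, one_pow, mul_one, Nat.card_zmod] at this
    rw [← this]
    refine Nat.card_congr (Equiv.subtypeEquivRight fun f => ?_)
    simp [δ, deltaHom, IsSignConstant, funext_iff, ← sub_eq_add_neg, sub_eq_zero]
  have hrange : Nat.card δ.range ≤ 3 ^ Nat.card E := by
    simpa [Nat.card_fun] using
      Nat.card_le_card_of_injective _ (Subtype.coe_injective (p := (· ∈ δ.range)))
  have hcard : 3 ^ Nat.card V ≤ 3 ^ (Nat.card E + Γ.kb) := by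
    have := AddSubgroup.card_mul_index δ.ker
    rw [AddSubgroup.index_ker, hker, Nat.card_fun, Nat.card_zmod] at this
    rw [← this, pow_add, mul_comm]
    exact Nat.mul_le_mul_right _ hrange
  exact (Nat.pow_le_pow_iff_right (by norm_num)).mp hcard

theorem card_isProperColoring_eq_sum [Fintype V] [Fintype E] (Γ : SGraph V E) (G : Type*)
    [AddCommGroup G] [Fintype G] :
    (Nat.card {f : V → G // Γ.IsProperColoring f} : ℤ) =
      ∑ A : Finset E, (-1) ^ A.card *
        (Nat.card {f : V → G // (Γ.restrict (A : Set E)).IsSignConstant f} : ℤ) := by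
  let S : E → Finset (V → G) := fun e =>
    {f | (Γ.sign e : ℤ) • f (Γ.ends e).1 = f (Γ.ends e).2}
  have hproper :
      ({f | Γ.IsProperColoring f} : Finset (V → G)) = Finset.univ.inf fun e => (S e)ᶜ := by
    ext f
    simp only [S, Finset.mem_filter, Finset.mem_univ, true_and, Finset.mem_inf, Finset.mem_compl,
      forall_const]
    rfl
  have hsat (A : Finset E) :
      ({f | (Γ.restrict (A : Set E)).IsSignConstant f} : Finset (V → G)) = A.inf S := by
    ext f
    simp only [S, Finset.mem_filter, Finset.mem_univ, true_and, Finset.mem_inf]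
    exact ⟨fun hf e he => hf ⟨e, he⟩, fun hf e => hf e.1 e.2⟩
  simp only [Nat.card_eq_fintype_card, Fintype.card_subtype, hproper, hsat,
    Finset.inclusion_exclusion_card_inf_compl, Finset.powerset_univ]

end SGraph

lemma signedTutte_term_eq {K : Type*} [Field K] (q t : K)
    {a n k k' kb ku : ℕ} (hkn : k ≤ n) (hkk' : k ≤ k') (hn : n ≤ a + kb) (hk' : kb + ku = k') :
    (-1) ^ a * (q ^ kb * (q / t) ^ ku) =
      (-1) ^ (n - k) * q ^ k *
        ((1 - q - 1) ^ (k' - k) * (0 - 1) ^ (a + kb - n) * ((1 - 1 / t) - 1) ^ ku) := by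
  have hsign : (-1 : K) ^ a = (-1) ^ (n - k + (k' - k) + (a + kb - n) + ku) := by
    rw [neg_one_pow_eq_pow_mod_two, neg_one_pow_eq_pow_mod_two (n - k + _ + _ + _)]
    congr 1
    omega
  have hq : q ^ kb * q ^ ku = q ^ k * q ^ (k' - k) := by
    rw [← pow_add, ← pow_add]
    congr 1
    omega
  rw [hsign, div_pow, ← mul_div_assoc, hq, show (1 - q - 1 : K) = -q by ring,
    show (1 - 1 / t - 1 : K) = -t⁻¹ by ring, neg_pow q, neg_pow t⁻¹]
  ring

section Statement

open SGraph

/-- Corollary 6.6: the number of proper `G`-colorings of a signed graph is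
`(−1)^{|V|−k(Σ)} · |G|^{k(Σ)} · T_Σ(1−|G|, 0, 1−1/|2G|)`. -/
theorem card_proper_G_colorings (V E : Type) [Finite V] [Finite E]
    (Γ : SGraph V E) (G : Type) [AddCommGroup G] [Finite G] :
    (Nat.card {f : V → G // Γ.IsProperColoring f} : ℚ) =
      (-1 : ℚ) ^ (Nat.card V - Γ.kAll) * (Nat.card G : ℚ) ^ Γ.kAll *
        Γ.signedTutte (1 - (Nat.card G : ℚ)) 0
          (1 - 1 / (Nat.card (twoG G) : ℚ)) := by
  have := Fintype.ofFinite V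
  have := Fintype.ofFinite E
  have := Fintype.ofFinite G
  have hG₂ : (Nat.card (torsion2 G) : ℚ) = Nat.card G / Nat.card (twoG G) := by
    rw [eq_div_iff (Nat.cast_ne_zero.mpr Nat.card_pos.ne'), ← Nat.cast_mul, mul_comm,
      card_twoG_mul_card_torsion2]
  rw [← Int.cast_natCast, card_isProperColoring_eq_sum, signedTutte, finsum_eq_sum_of_fintype,
    Finset.mul_sum]
  push_cast
  refine Finset.sum_congr rfl fun A _ => ?_
  rw [card_isSignConstant, Nat.cast_mul, Nat.cast_pow, Nat.cast_pow, hG₂]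
  have hA := (Γ.restrict (A : Set E)).card_le_card_add_kb
  rw [Nat.card_coe_set_eq, Set.ncard_coe_finset] at hA
  exact signedTutte_term_eq _ _ Γ.kAll_le_card (Γ.kAll_le_kAll_restrict _) hA (kb_add_ku _)

end Statement
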